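/- Let x⋆ be a mode of f and let −λ⋆ < 0 be the largest eigenvalue of the symmetric matrix ∇²f(x⋆). Then there exists δ⋆ > 0 such that for all sufficiently small η > 0 and every f̃ ∈ F_η: f̃ has exactly one critical point in ball(x⋆, δ⋆); this critical point, denoted x̃⋆, is a local maximum of f̃; and ‖x⋆ − x̃⋆‖² ≤ (16/(3λ⋆))·η. -/

import Mathlib

/-! At a mode with largest Hessian eigenvalue `-λ⋆`, continuity of `∇²f` gives a ball on which
`∇²f ≤ -(3/4)λ⋆`, and for `η ≤ λ⋆/4` every `f̃ ∈ F_η` has `∇²f̃ ≤ -λ⋆/2` there. The first bound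
puts `f` below the paraboloid `f(x⋆) - (3λ⋆/8)‖y - x⋆‖²` on the ball, so the maximiser `z` of
`f̃` over the closed ball, which is `2η`-optimal for `f`, satisfies `(3λ⋆/8)‖z - x⋆‖² ≤ 2η`.
For small `η` this puts `z` in the open ball, hence it is a local maximum and a critical point;
the second bound makes `∇f̃` strongly monotone (decreasing) on the ball, so `z` is its only zero. -/

open Metric Set Filter MeasureTheory Topology
open scoped Topology RealInnerProductSpace

abbrev Euc (d : ℕ) := EuclideanSpace ℝ (Fin d)

/-- The Hessian of `f`, as the derivative of the gradient field. -/
noncomputable def hess {d : ℕ} (f : Euc d → ℝ) (x : Euc d) : Euc d →L[ℝ] Euc d :=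
  fderiv ℝ (gradient f) x

/-- The standing assumptions on the density `f`: nonnegative, integrable, vanishing at
infinity, twice differentiable with bounded and uniformly continuous zeroth, first and
second derivatives, and Morse (nonsingular Hessian at every critical point). -/
def IsNiceDensity {d : ℕ} (f : Euc d → ℝ) : Prop :=
  (∀ x, 0 ≤ f x) ∧
  Integrable f volume ∧
  Tendsto f (cocompact (Euc d)) (𝓝 0) ∧
  Differentiable ℝ f ∧
  Differentiable ℝ (gradient f) ∧
  (∃ M, ∀ x, |f x| ≤ M) ∧
  (∃ M, ∀ x, ‖gradient f x‖ ≤ M) ∧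
  (∃ M, ∀ x, ‖hess f x‖ ≤ M) ∧
  UniformContinuous f ∧
  UniformContinuous (gradient f) ∧
  UniformContinuous (hess f) ∧
  (∀ x, gradient f x = 0 → Function.Bijective (hess f x))

/-- `γ` is the gradient ascent curve of `f` starting at `x`, defined on `[0, ∞)`. -/
def IsGradFlow {d : ℕ} (f : Euc d → ℝ) (x : Euc d) (γ : ℝ → Euc d) : Prop :=
  γ 0 = x ∧ ∀ t ∈ Ici (0:ℝ), HasDerivWithinAt γ (gradient f (γ t)) (Ici 0) t

/-- `ftil` belongs to the perturbation class `F_η` around `f`: it is twice differentiable with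
bounded and uniformly continuous zeroth, first and second derivatives, and is uniformly
`η`-close to `f` together with its first and second derivatives. -/
def InPerturbClass {d : ℕ} (f ftil : Euc d → ℝ) (η : ℝ) : Prop :=
  Differentiable ℝ ftil ∧
  Differentiable ℝ (gradient ftil) ∧
  (∃ M, ∀ x, |ftil x| ≤ M) ∧
  (∃ M, ∀ x, ‖gradient ftil x‖ ≤ M) ∧
  (∃ M, ∀ x, ‖hess ftil x‖ ≤ M) ∧
  UniformContinuous ftil ∧
  UniformContinuous (gradient ftil) ∧
  UniformContinuous (hess ftil) ∧
  (∀ x, |ftil x - f x| ≤ η) ∧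
  (∀ x, ‖gradient ftil x - gradient f x‖ ≤ η) ∧
  (∀ x, ‖hess ftil x - hess f x‖ ≤ η)

lemma apply_one_le_apply_zero_of_hasDerivAt {φ φ' : ℝ → ℝ} (hφ : ∀ t, HasDerivAt φ (φ' t) t)
    (hφ' : ∀ t ∈ Ioo (0 : ℝ) 1, φ' t ≤ 0) : φ 1 ≤ φ 0 := by
  have hanti : AntitoneOn φ (Icc 0 1) :=
    antitoneOn_of_hasDerivWithinAt_nonpos (convex_Icc 0 1)
      (fun t _ => (hφ t).continuousAt.continuousWithinAt)
      (fun t _ => (hφ t).hasDerivWithinAt) (by simpa only [interior_Icc] using hφ')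
  exact hanti (left_mem_Icc.2 zero_le_one) (right_mem_Icc.2 zero_le_one) zero_le_one

section InnerProductSpace

variable {E : Type*} [NormedAddCommGroup E] [InnerProductSpace ℝ E]

lemma inner_apply_self_le_sSup_mul_sq (T : E →L[ℝ] E) (v : E) :
    ⟪T v, v⟫ ≤ sSup {r : ℝ | ∃ u : E, ‖u‖ = 1 ∧ ⟪T u, u⟫ = r} * ‖v‖ ^ 2 := by
  rcases eq_or_ne v 0 with rfl | hv
  · simp
  have hv' : ‖v‖ ≠ 0 := norm_ne_zero_iff.2 hv
  set u : E := ‖v‖⁻¹ • v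
  have hbdd : BddAbove {r : ℝ | ∃ u : E, ‖u‖ = 1 ∧ ⟪T u, u⟫ = r} := by
    refine ⟨‖T‖, ?_⟩
    rintro r ⟨w, hw, rfl⟩
    simpa [hw] using (real_inner_le_norm (T w) w).trans
      (mul_le_mul_of_nonneg_right (T.le_opNorm w) (norm_nonneg w))
  have hu : ⟪T u, u⟫ ≤ sSup {r : ℝ | ∃ u : E, ‖u‖ = 1 ∧ ⟪T u, u⟫ = r} :=
    le_csSup hbdd ⟨u, by simp [u, norm_smul, hv'], rfl⟩
  have hvu : ⟪T v, v⟫ = ⟪T u, u⟫ * ‖v‖ ^ 2 := by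
    simp only [u, map_smul, real_inner_smul_left, real_inner_smul_right]
    field_simp
  rw [hvu]
  gcongr

lemma inner_apply_self_le_add_norm_sub_mul_sq (T S : E →L[ℝ] E) (v : E) :
    ⟪T v, v⟫ ≤ ⟪S v, v⟫ + ‖T - S‖ * ‖v‖ ^ 2 := by
  have h : ⟪(T - S) v, v⟫ ≤ ‖T - S‖ * ‖v‖ ^ 2 := by
    calc ⟪(T - S) v, v⟫ ≤ ‖(T - S) v‖ * ‖v‖ := real_inner_le_norm _ _
      _ ≤ ‖T - S‖ * ‖v‖ * ‖v‖ := by gcongr; exact (T - S).le_opNorm v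
      _ = ‖T - S‖ * ‖v‖ ^ 2 := by ring
  rw [sub_apply, inner_sub_left] at h
  linarith

lemma exists_closedBall_inner_apply_self_le {A : E → E →L[ℝ] E} {x₀ : E} {c ε : ℝ}
    (hA : ContinuousAt A x₀) (hc : ∀ v, ⟪A x₀ v, v⟫ ≤ c * ‖v‖ ^ 2) (hε : 0 < ε) :
    ∃ δ > 0, ∀ p ∈ closedBall x₀ δ, ∀ v, ⟪A p v, v⟫ ≤ (c + ε) * ‖v‖ ^ 2 := by
  obtain ⟨δ, hδ, hA⟩ :=
    nhds_basis_closedBall.eventually_iff.mp (hA.eventually (ball_mem_nhds _ hε))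
  refine ⟨δ, hδ, fun p hp v => ?_⟩
  have hnear : ‖A p - A x₀‖ ≤ ε := by simpa [dist_eq_norm] using (mem_ball.mp (hA hp)).le
  have := inner_apply_self_le_add_norm_sub_mul_sq (A p) (A x₀) v
  nlinarith [hc v, sq_nonneg ‖v‖]

lemma hasDerivAt_add_smul (x v : E) (t : ℝ) : HasDerivAt (fun s : ℝ => x + s • v) v t := by
  simpa using ((hasDerivAt_id t).smul_const v).const_add x

lemma hasDerivAt_inner_apply_add_smul {g : E → E} (hg : Differentiable ℝ g) (x v : E) (t : ℝ) :
    HasDerivAt (fun s : ℝ => ⟪g (x + s • v), v⟫) ⟪fderiv ℝ g (x + t • v) v, v⟫ t := by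
  simpa using ((hg _).hasFDerivAt.comp_hasDerivAt t (hasDerivAt_add_smul x v t)).inner ℝ
    (hasDerivAt_const t v)

lemma Convex.inner_map_sub_map_le_of_fderiv_inner_le {g : E → E} {s : Set E} {K : ℝ}
    (hs : Convex ℝ s) (hg : Differentiable ℝ g)
    (hK : ∀ p ∈ s, ∀ v, ⟪fderiv ℝ g p v, v⟫ ≤ -K * ‖v‖ ^ 2) {x y : E} (hx : x ∈ s) (hy : y ∈ s) :
    ⟪g y - g x, y - x⟫ ≤ -K * ‖y - x‖ ^ 2 := by
  have h := apply_one_le_apply_zero_of_hasDerivAt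
    (φ := fun t => ⟪g (x + t • (y - x)), y - x⟫ + t * (K * ‖y - x‖ ^ 2))
    (fun t => (hasDerivAt_inner_apply_add_smul hg x (y - x) t).add
      ((hasDerivAt_id t).mul_const (K * ‖y - x‖ ^ 2)))
    (fun t ht => by
      have := hK _ (hs.add_smul_sub_mem hx hy (Ioo_subset_Icc_self ht)) (y - x)
      simp only [one_mul]
      linarith)
  simp only [one_smul, zero_smul, add_zero, add_sub_cancel, one_mul, zero_mul] at h
  rw [inner_sub_left]
  linarith

lemma Convex.injOn_of_fderiv_inner_le {g : E → E} {s : Set E} {K : ℝ} (hs : Convex ℝ s)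
    (hg : Differentiable ℝ g) (hK₀ : 0 < K)
    (hK : ∀ p ∈ s, ∀ v, ⟪fderiv ℝ g p v, v⟫ ≤ -K * ‖v‖ ^ 2) : InjOn g s := by
  intro x hx y hy hxy
  have := hs.inner_map_sub_map_le_of_fderiv_inner_le hg hK hx hy
  rw [hxy, sub_self, inner_zero_left] at this
  have : ‖y - x‖ ^ 2 ≤ 0 := by nlinarith
  simpa [sub_eq_zero, eq_comm] using this

end InnerProductSpace

section CompleteSpace

variable {E : Type*} [NormedAddCommGroup E] [InnerProductSpace ℝ E] [CompleteSpace E]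

lemma IsLocalMax.gradient_eq_zero {f : E → ℝ} {x : E} (h : IsLocalMax f x) : gradient f x = 0 := by
  simp [gradient, h.fderiv_eq_zero]

lemma Convex.le_add_inner_gradient_sub_half_mul_sq {f : E → ℝ} {s : Set E} {K : ℝ}
    (hs : Convex ℝ s) (hf : Differentiable ℝ f) (hgf : Differentiable ℝ (gradient f))
    (hK : ∀ p ∈ s, ∀ v, ⟪fderiv ℝ (gradient f) p v, v⟫ ≤ -K * ‖v‖ ^ 2)
    {x y : E} (hx : x ∈ s) (hy : y ∈ s) :
    f y ≤ f x + ⟪gradient f x, y - x⟫ - K / 2 * ‖y - x‖ ^ 2 := by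
  set v := y - x
  have hfv (t : ℝ) : HasDerivAt (fun s : ℝ => f (x + s • v)) ⟪gradient f (x + t • v), v⟫ t := by
    have h : HasDerivAt (fun s : ℝ => f (x + s • v)) (fderiv ℝ f (x + t • v) v) t :=
      (hf _).hasFDerivAt.comp_hasDerivAt t (hasDerivAt_add_smul x v t)
    rwa [← inner_gradient_left] at h
  have h := apply_one_le_apply_zero_of_hasDerivAt
    (φ := fun t => f (x + t • v) - t * ⟪gradient f x, v⟫ + K / 2 * t ^ 2 * ‖v‖ ^ 2)
    (φ' := fun t => ⟪gradient f (x + t • v), v⟫ - ⟪gradient f x, v⟫ + K * t * ‖v‖ ^ 2)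
    (fun t => (((hfv t).sub ((hasDerivAt_id t).mul_const _)).add
        (((hasDerivAt_pow 2 t).const_mul (K / 2)).mul_const (‖v‖ ^ 2))).congr_deriv (by ring))
    (fun t ht => by
      -- strong monotonicity of `∇f` between `x` and `x + t • v`, divided by `t > 0`
      have hmono := hs.inner_map_sub_map_le_of_fderiv_inner_le hgf hK hx
        (hs.add_smul_sub_mem hx hy (Ioo_subset_Icc_self ht))
      rw [add_sub_cancel_left, inner_sub_left, real_inner_smul_right, real_inner_smul_right,
        norm_smul, Real.norm_of_nonneg ht.1.le] at hmono
      nlinarith [ht.1])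
  simp only [one_smul, zero_smul, add_zero, one_mul, one_pow] at h
  rw [show x + v = y by simp [v]] at h
  linarith

end CompleteSpace

lemma exists_isLocalMax_sq_norm_sub_le {E : Type*} [SeminormedAddCommGroup E] [ProperSpace E]
    {f g : E → ℝ} {x₀ : E} {δ c η : ℝ} (hδ : 0 < δ) (hc : 0 < c)
    (hpeak : ∀ y ∈ closedBall x₀ δ, f y ≤ f x₀ - c * ‖y - x₀‖ ^ 2)
    (hg : ContinuousOn g (closedBall x₀ δ)) (hfg : ∀ x, |g x - f x| ≤ η)
    (hη : 2 * η / c < δ ^ 2) :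
    ∃ z ∈ ball x₀ δ, IsLocalMax g z ∧ ‖z - x₀‖ ^ 2 ≤ 2 * η / c := by
  obtain ⟨z, hz, hzmax⟩ := (isCompact_closedBall x₀ δ).exists_isMaxOn
    ⟨x₀, mem_closedBall_self hδ.le⟩ hg
  have hgz : g x₀ ≤ g z := hzmax (mem_closedBall_self hδ.le)
  have hdist : ‖z - x₀‖ ^ 2 ≤ 2 * η / c := by
    rw [le_div_iff₀ hc]
    linarith [hpeak z hz, abs_le.mp (hfg z), abs_le.mp (hfg x₀)]
  have hzball : z ∈ ball x₀ δ := by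
    rw [mem_ball, dist_eq_norm]
    exact lt_of_pow_lt_pow_left₀ 2 hδ.le (hdist.trans_lt hη)
  exact ⟨z, hzball, hzmax.isLocalMax (mem_of_superset (isOpen_ball.mem_nhds hzball)
    ball_subset_closedBall), hdist⟩

theorem perturbed_mode_exists_unique_and_close_general
    {d : ℕ} (f : Euc d → ℝ) (hf : IsNiceDensity f)
    (xstar : Euc d) (hmode : IsLocalMax f xstar)
    (lam : ℝ) (hlam : 0 < lam)
    (hlamEig : -lam = sSup {r : ℝ | ∃ v : Euc d, ‖v‖ = 1 ∧ ⟪(hess f xstar) v, v⟫ = r}) :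
    ∃ δstar > (0:ℝ), ∃ η₀ > (0:ℝ), ∀ η : ℝ, 0 < η → η ≤ η₀ →
      ∀ ftil : Euc d → ℝ, InPerturbClass f ftil η →
        ∃ z : Euc d, (z ∈ ball xstar δstar ∧ gradient ftil z = 0) ∧
          (∀ w : Euc d, w ∈ ball xstar δstar → gradient ftil w = 0 → w = z) ∧
          IsLocalMax ftil z ∧
          ‖xstar - z‖ ^ 2 ≤ (16 / (3 * lam)) * η := by
  obtain ⟨-, -, -, hdf, hdg, -, -, -, -, -, hucH, -⟩ := hf
  have hH (v : Euc d) : ⟪hess f xstar v, v⟫ ≤ -lam * ‖v‖ ^ 2 :=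
    hlamEig ▸ inner_apply_self_le_sSup_mul_sq (hess f xstar) v
  obtain ⟨δ, hδ, hHf⟩ := exists_closedBall_inner_apply_self_le hucH.continuous.continuousAt hH
    (by positivity : 0 < lam / 4)
  have hpeak : ∀ y ∈ closedBall xstar δ, f y ≤ f xstar - 3 * lam / 8 * ‖y - xstar‖ ^ 2 := by
    intro y hy
    have := (convex_closedBall xstar δ).le_add_inner_gradient_sub_half_mul_sq (K := 3 * lam / 4)
      hdf hdg (fun p hp v => (hHf p hp v).trans_eq (by ring)) (mem_closedBall_self hδ.le) hy
    rw [hmode.gradient_eq_zero, inner_zero_left] at this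
    linarith
  refine ⟨δ, hδ, min (lam / 4) (3 * lam * δ ^ 2 / 32), by positivity,
    fun η hη hη₀ ftil hftil => ?_⟩
  obtain ⟨hdftil, hdgtil, -, -, -, -, -, -, hclose, -, hcloseH⟩ := hftil
  have hHftil (p : Euc d) (hp : p ∈ closedBall xstar δ) (v : Euc d) :
      ⟪hess ftil p v, v⟫ ≤ -(lam / 2) * ‖v‖ ^ 2 := by
    have := inner_apply_self_le_add_norm_sub_mul_sq (hess ftil p) (hess f p) v
    nlinarith [hHf p hp v, hcloseH p, min_le_left (lam / 4) (3 * lam * δ ^ 2 / 32), sq_nonneg ‖v‖]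
  have hηδ : 2 * η / (3 * lam / 8) < δ ^ 2 := by
    rw [div_lt_iff₀ (by positivity)]
    nlinarith [min_le_right (lam / 4) (3 * lam * δ ^ 2 / 32)]
  obtain ⟨z, hz, hzmax, hzdist⟩ := exists_isLocalMax_sq_norm_sub_le hδ (by positivity) hpeak
    hdftil.continuous.continuousOn hclose hηδ
  refine ⟨z, ⟨hz, hzmax.gradient_eq_zero⟩, fun w hw hgw => ?_, hzmax, ?_⟩
  · exact (convex_closedBall xstar δ).injOn_of_fderiv_inner_le hdgtil (by positivity) hHftil
      (ball_subset_closedBall hw) (ball_subset_closedBall hz)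
      (hgw.trans hzmax.gradient_eq_zero.symm)
  · rw [norm_sub_rev]
    convert hzdist using 1
    field_simp
    ring

/-- Let `x⋆` be a mode of `f` and `−λ⋆ < 0` the largest eigenvalue of
`∇²f(x⋆)`. Then there is `δ⋆ > 0` such that for all small `η > 0`, every `f̃ ∈ F_η` has a
unique critical point in `ball(x⋆, δ⋆)`; it is a local maximum `x̃⋆` of `f̃` and satisfies
`‖x⋆ − x̃⋆‖² ≤ (16/(3λ⋆)) η`. -/
theorem perturbed_mode_exists_unique_and_close
    {d : ℕ} (hd : 0 < d) (f : Euc d → ℝ) (hf : IsNiceDensity f)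
    (xstar : Euc d) (hmode : IsLocalMax f xstar)
    (lam : ℝ) (hlam : 0 < lam)
    (hlamEig : -lam = sSup {r : ℝ | ∃ v : Euc d, ‖v‖ = 1 ∧ ⟪(hess f xstar) v, v⟫ = r}) :
    ∃ δstar > (0:ℝ), ∃ η₀ > (0:ℝ), ∀ η : ℝ, 0 < η → η ≤ η₀ →
      ∀ ftil : Euc d → ℝ, InPerturbClass f ftil η →
        ∃ z : Euc d, (z ∈ ball xstar δstar ∧ gradient ftil z = 0) ∧
          (∀ w : Euc d, w ∈ ball xstar δstar → gradient ftil w = 0 → w = z) ∧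
          IsLocalMax ftil z ∧
          ‖xstar - z‖ ^ 2 ≤ (16 / (3 * lam)) * η :=
  perturbed_mode_exists_unique_and_close_general f hf xstar hmode lam hlam hlamEig
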